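/- In the free product ℤ/2 ∗ (ℤ/2 × ℤ/2) = ⟨a, b, c ∣ a² = b² = c² = 1, bc = cb⟩, the subgroup generated by the elements abab and acac is a free group of rank 2. -/

import Mathlib

open Monoid

/-- The free product `ℤ/2 ∗ (ℤ/2 × ℤ/2)`. -/
abbrev D : Type :=
  Coprod (Multiplicative (ZMod 2)) (Multiplicative (ZMod 2) × Multiplicative (ZMod 2))

/-- The generator `a` of the first factor. -/
def genA : D := Coprod.inl (Multiplicative.ofAdd (1 : ZMod 2))

/-- The generator `b` of the second factor. -/
def genB : D := Coprod.inr (Multiplicative.ofAdd (1 : ZMod 2), 1)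

/-- The generator `c` of the second factor. -/
def genC : D := Coprod.inr (1, Multiplicative.ofAdd (1 : ZMod 2))
/-!
Ping-pong for the action of `D` on its normal forms, the reduced words in `a` and `b, c, bc`.
Multiplying a reduced word that does not begin with `ba` on the left by `abab` cancels or
merges at most its first letter, so the result begins with `ab`. In the same way
`(abab)⁻¹ = baba` sends every word not beginning with `ab` to one beginning with `ba`, and
likewise for `acac` with `c` in place of `b`. The four sets of words beginning with
`ab`, `ba`, `ac`, `ca` are pairwise disjoint, so the ping-pong lemma applies.
-/

section

variable {G : Type*} [Group G]

def involutionHom (g : G) (hg : g * g = 1) : Multiplicative (ZMod 2) →* G where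
  toFun x := g ^ (Multiplicative.toAdd x).val
  map_one' := pow_zero g
  map_mul' := by
    have h : ∀ x : Multiplicative (ZMod 2), x = 1 ∨ x = .ofAdd 1 := by decide
    intro x y
    rcases h x with rfl | rfl <;> rcases h y with rfl | rfl <;>
      simp [← ofAdd_add, show (1 + 1 : ZMod 2) = 0 from rfl, show (1 : ZMod 2).val = 1 from rfl, hg]

lemma commute_involutionHom {g h : G} (hg : g * g = 1) (hh : h * h = 1) (hgh : Commute g h)
    (m n : Multiplicative (ZMod 2)) : Commute (involutionHom g hg m) (involutionHom h hh n) :=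
  hgh.pow_pow _ _

lemma involutionHom_ofAdd_one (g : G) (hg : g * g = 1) :
    involutionHom g hg (.ofAdd 1) = g :=
  pow_one g

end

namespace AbabAcac

inductive Letter : Type
  | a | b | c | bc
  deriving DecidableEq

open Letter
open scoped Pointwise

def Letter.isA : Letter → Bool
  | a => true
  | _ => false

def Reduced (l : List Letter) : Prop := l.IsChain fun x y => x.isA ≠ y.isA

/-! Reduced words are the normal forms of elements of `D`, and `actA`, `actB`, `actC` are left
multiplication by the generators on them. -/

def actA : List Letter → List Letter
  | a :: t => t
  | l => a :: l

def actB : List Letter → List Letter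
  | b :: t => t
  | c :: t => bc :: t
  | bc :: t => c :: t
  | l => b :: l

def actC : List Letter → List Letter
  | c :: t => t
  | b :: t => bc :: t
  | bc :: t => b :: t
  | l => c :: l

lemma Reduced.actA {l : List Letter} (h : Reduced l) : Reduced (actA l) := by
  rcases l with _ | ⟨x, _ | ⟨y, r⟩⟩ <;> try cases x
  all_goals simp_all [AbabAcac.actA, Reduced, Letter.isA, List.isChain_cons_cons]

lemma Reduced.actB {l : List Letter} (h : Reduced l) : Reduced (actB l) := by
  rcases l with _ | ⟨x, _ | ⟨y, r⟩⟩ <;> try cases x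
  all_goals simp_all [AbabAcac.actB, Reduced, Letter.isA, List.isChain_cons_cons]

lemma Reduced.actC {l : List Letter} (h : Reduced l) : Reduced (actC l) := by
  rcases l with _ | ⟨x, _ | ⟨y, r⟩⟩ <;> try cases x
  all_goals simp_all [AbabAcac.actC, Reduced, Letter.isA, List.isChain_cons_cons]

lemma actA_actA {l : List Letter} (h : Reduced l) : actA (actA l) = l := by
  rcases l with _ | ⟨x, _ | ⟨y, r⟩⟩ <;> try cases x
  all_goals try cases y
  all_goals simp_all [AbabAcac.actA, Reduced, Letter.isA, List.isChain_cons_cons]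

lemma actB_actB {l : List Letter} (h : Reduced l) : actB (actB l) = l := by
  rcases l with _ | ⟨x, _ | ⟨y, r⟩⟩ <;> try cases x
  all_goals try cases y
  all_goals simp_all [AbabAcac.actB, Reduced, Letter.isA, List.isChain_cons_cons]

lemma actC_actC {l : List Letter} (h : Reduced l) : actC (actC l) = l := by
  rcases l with _ | ⟨x, _ | ⟨y, r⟩⟩ <;> try cases x
  all_goals try cases y
  all_goals simp_all [AbabAcac.actC, Reduced, Letter.isA, List.isChain_cons_cons]

lemma actB_actC {l : List Letter} (h : Reduced l) : actB (actC l) = actC (actB l) := by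
  rcases l with _ | ⟨x, _ | ⟨y, r⟩⟩ <;> try cases x
  all_goals try cases y
  all_goals simp_all [AbabAcac.actB, AbabAcac.actC, Reduced, Letter.isA, List.isChain_cons_cons]

def Word : Type := {l : List Letter // Reduced l}

def permA : Equiv.Perm Word :=
  Function.Involutive.toPerm (fun w => ⟨actA w.1, w.2.actA⟩) fun w => Subtype.ext (actA_actA w.2)

def permB : Equiv.Perm Word :=
  Function.Involutive.toPerm (fun w => ⟨actB w.1, w.2.actB⟩) fun w => Subtype.ext (actB_actB w.2)

def permC : Equiv.Perm Word :=
  Function.Involutive.toPerm (fun w => ⟨actC w.1, w.2.actC⟩) fun w => Subtype.ext (actC_actC w.2)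

lemma permA_mul_self : permA * permA = 1 := Equiv.ext fun w => Subtype.ext (actA_actA w.2)

lemma permB_mul_self : permB * permB = 1 := Equiv.ext fun w => Subtype.ext (actB_actB w.2)

lemma permC_mul_self : permC * permC = 1 := Equiv.ext fun w => Subtype.ext (actC_actC w.2)

lemma commute_permB_permC : Commute permB permC := Equiv.ext fun w => Subtype.ext (actB_actC w.2)

def toPerm : D →* Equiv.Perm Word :=
  Coprod.lift (involutionHom permA permA_mul_self)
    ((involutionHom permB permB_mul_self).noncommCoprod (involutionHom permC permC_mul_self)
      (commute_involutionHom _ _ commute_permB_permC))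

instance : MulAction D Word := MulAction.compHom Word toPerm

lemma toPerm_genA : toPerm genA = permA := by
  rw [toPerm, genA, Coprod.lift_apply_inl, involutionHom_ofAdd_one]

lemma genA_smul (w : Word) : (genA • w).1 = actA w.1 := by
  change (toPerm genA w).1 = _
  rw [toPerm_genA]
  rfl

lemma toPerm_genB : toPerm genB = permB := by
  rw [toPerm, genB, Coprod.lift_apply_inr, MonoidHom.noncommCoprod_apply, involutionHom_ofAdd_one,
    map_one, mul_one]

lemma genB_smul (w : Word) : (genB • w).1 = actB w.1 := by
  change (toPerm genB w).1 = _
  rw [toPerm_genB]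
  rfl

lemma toPerm_genC : toPerm genC = permC := by
  rw [toPerm, genC, Coprod.lift_apply_inr, MonoidHom.noncommCoprod_apply, involutionHom_ofAdd_one,
    map_one, one_mul]

lemma genC_smul (w : Word) : (genC • w).1 = actC w.1 := by
  change (toPerm genC w).1 = _
  rw [toPerm_genC]
  rfl

lemma genA_inv : genA⁻¹ = genA := by rw [genA, ← map_inv]; rfl

lemma genB_inv : genB⁻¹ = genB := by rw [genB, ← map_inv]; rfl

lemma genC_inv : genC⁻¹ = genC := by rw [genC, ← map_inv]; rfl

lemma take_two_actA_actB_actA_actB {l : List Letter} (h : Reduced l) (hl : l.take 2 ≠ [b, a]) :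
    (actA (actB (actA (actB l)))).take 2 = [a, b] := by
  rcases l with _ | ⟨x, _ | ⟨y, r⟩⟩ <;> try cases x
  all_goals try cases y
  all_goals simp_all [AbabAcac.actA, AbabAcac.actB, Reduced, Letter.isA, List.isChain_cons_cons]

lemma take_two_actB_actA_actB_actA {l : List Letter} (h : Reduced l) (hl : l.take 2 ≠ [a, b]) :
    (actB (actA (actB (actA l)))).take 2 = [b, a] := by
  rcases l with _ | ⟨x, _ | ⟨y, r⟩⟩ <;> try cases x
  all_goals try cases y
  all_goals simp_all [AbabAcac.actA, AbabAcac.actB, Reduced, Letter.isA, List.isChain_cons_cons]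

lemma take_two_actA_actC_actA_actC {l : List Letter} (h : Reduced l) (hl : l.take 2 ≠ [c, a]) :
    (actA (actC (actA (actC l)))).take 2 = [a, c] := by
  rcases l with _ | ⟨x, _ | ⟨y, r⟩⟩ <;> try cases x
  all_goals try cases y
  all_goals simp_all [AbabAcac.actA, AbabAcac.actC, Reduced, Letter.isA, List.isChain_cons_cons]

lemma take_two_actC_actA_actC_actA {l : List Letter} (h : Reduced l) (hl : l.take 2 ≠ [a, c]) :
    (actC (actA (actC (actA l)))).take 2 = [c, a] := by
  rcases l with _ | ⟨x, _ | ⟨y, r⟩⟩ <;> try cases x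
  all_goals try cases y
  all_goals simp_all [AbabAcac.actA, AbabAcac.actC, Reduced, Letter.isA, List.isChain_cons_cons]

def beginsWith (x y : Letter) : Set Word := {w | w.1.take 2 = [x, y]}

lemma nonempty_beginsWith {x y : Letter} (h : x.isA ≠ y.isA) : (beginsWith x y).Nonempty :=
  ⟨⟨[x, y], by simpa [Reduced] using h⟩, rfl⟩

lemma disjoint_beginsWith {x y x' y' : Letter} (h : [x, y] ≠ [x', y']) :
    Disjoint (beginsWith x y) (beginsWith x' y') :=
  Set.disjoint_left.mpr fun _ hw hw' => h (hw.symm.trans hw')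

lemma abab_smul_subset : (genA * genB * genA * genB) • (beginsWith b a)ᶜ ⊆ beginsWith a b := by
  rintro _ ⟨w, hw, rfl⟩
  simpa only [beginsWith, Set.mem_ofPred_eq, mul_smul, genA_smul, genB_smul]
    using take_two_actA_actB_actA_actB w.2 hw

lemma abab_inv_smul_subset :
    (genA * genB * genA * genB)⁻¹ • (beginsWith a b)ᶜ ⊆ beginsWith b a := by
  rintro _ ⟨w, hw, rfl⟩
  simpa only [beginsWith, Set.mem_ofPred_eq, mul_inv_rev, genA_inv, genB_inv, mul_smul, genA_smul,
    genB_smul] using take_two_actB_actA_actB_actA w.2 hw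

lemma acac_smul_subset : (genA * genC * genA * genC) • (beginsWith c a)ᶜ ⊆ beginsWith a c := by
  rintro _ ⟨w, hw, rfl⟩
  simpa only [beginsWith, Set.mem_ofPred_eq, mul_smul, genA_smul, genC_smul]
    using take_two_actA_actC_actA_actC w.2 hw

lemma acac_inv_smul_subset :
    (genA * genC * genA * genC)⁻¹ • (beginsWith a c)ᶜ ⊆ beginsWith c a := by
  rintro _ ⟨w, hw, rfl⟩
  simpa only [beginsWith, Set.mem_ofPred_eq, mul_inv_rev, genA_inv, genC_inv, mul_smul, genA_smul,
    genC_smul] using take_two_actC_actA_actC_actA w.2 hw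

end AbabAcac

open AbabAcac

/-- In `ℤ/2 ∗ (ℤ/2 × ℤ/2) = ⟨a, b, c ∣ a² = b² = c² = 1, bc = cb⟩`, the subgroup
generated by `abab` and `acac` is free of rank 2: the homomorphism from the free
group on two generators sending them to `abab` and `acac` is injective, and its
range is the subgroup generated by these two elements. -/
theorem abab_acac_free :
    Function.Injective (FreeGroup.lift fun t : Bool =>
      if t then genA * genB * genA * genB else genA * genC * genA * genC) ∧
    (FreeGroup.lift fun t : Bool =>
      if t then genA * genB * genA * genB else genA * genC * genA * genC).range =
      Subgroup.closure {genA * genB * genA * genB, genA * genC * genA * genC} := by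
  constructor
  · apply FreeGroup.injective_lift_of_ping_pong _
      (fun t => beginsWith .a (if t then .b else .c))
      (fun t => beginsWith (if t then .b else .c) .a)
    · rintro (_ | _) <;> exact nonempty_beginsWith (by decide)
    · intro s t hst
      cases s <;> cases t <;> first | exact absurd rfl hst | exact disjoint_beginsWith (by decide)
    · intro s t hst
      cases s <;> cases t <;> first | exact absurd rfl hst | exact disjoint_beginsWith (by decide)
    · intro s t
      cases s <;> cases t <;> exact disjoint_beginsWith (by decide)
    · rintro (_ | _)
      exacts [acac_smul_subset, abab_smul_subset]
    · rintro (_ | _)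
      exacts [acac_inv_smul_subset, abab_inv_smul_subset]
  · rw [FreeGroup.range_lift_eq_closure,
      Set.range_ite_const (p := (· = true)) ⟨true, rfl⟩ ⟨false, Bool.false_ne_true⟩]
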